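/- arXiv:1012.5291 — 8 statements merged into one kernel-verified Lean document; each statement's English description precedes it below -/
import Mathlib

section
/- Let n be a positive integer and let R_n denote the dihedral quandle, i.e., the set Z_n of integers modulo n with quandle operation i * j = 2j − i (mod n). Then the automorphism group Aut(R_n) of the quandle R_n is isomorphic (as a group) to the affine group Aff(Z_n) of the integers mod n, i.e., to the semidirect product Z_n ⋊ (Z_n)^×, where (Z_n)^× acts on Z_n by multiplication. -/
/-- The automorphism group of a binary operation `op` on `X`, realized as the
subgroup of the permutation group of `X` consisting of all bijections `f`
with `f (op a b) = op (f a) (f b)` for all `a b`. -/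
def quandleAut {X : Type*} (op : X → X → X) : Subgroup (Equiv.Perm X) where
  carrier := {f | ∀ a b : X, f (op a b) = op (f a) (f b)}
  one_mem' := fun _ _ => rfl
  mul_mem' := by
    intro f g hf hg a b
    rw [Equiv.Perm.mul_apply, hg, hf, Equiv.Perm.mul_apply, Equiv.Perm.mul_apply]
  inv_mem' := by
    intro f hf a b
    apply f.injective
    rw [hf]
    simp

/-!
The dihedral operation is the point reflection `i * j = Equiv.pointReflection j i`, so every
affine equivalence of `ZMod n` is a quandle automorphism. Conversely, a map preserving point
reflections satisfies the recurrence `f ((k + 1) • g) = 2 • f (k • g) - f ((k - 1) • g)`, hence is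
an arithmetic progression on the multiples of any `g`; as `1` generates `ZMod n`, a quandle
automorphism is `x ↦ u * x + f 0`, and `u` is a unit because `f` is surjective.
-/

open Function

theorem Equiv.pointReflection_eq_two_mul_sub {R : Type*} [Ring R] (x y : R) :
    Equiv.pointReflection x y = 2 * x - y := by
  rw [Equiv.pointReflection_apply, vsub_eq_sub, vadd_eq_add, two_mul]
  abel

theorem AffineMap.map_pointReflection {k V₁ P₁ V₂ P₂ : Type*} [Ring k] [AddCommGroup V₁]
    [Module k V₁] [AddTorsor V₁ P₁] [AddCommGroup V₂] [Module k V₂] [AddTorsor V₂ P₂]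
    (f : P₁ →ᵃ[k] P₂) (x y : P₁) :
    f (Equiv.pointReflection x y) = Equiv.pointReflection (f x) (f y) := by
  simp [Equiv.pointReflection_apply, map_vadd, linearMap_vsub]

theorem map_zsmul_of_map_pointReflection {G H : Type*} [AddCommGroup G] [AddCommGroup H]
    {f : G → H} (hf : ∀ x y, f (Equiv.pointReflection x y) = Equiv.pointReflection (f x) (f y))
    (g : G) (k : ℤ) : f (k • g) = k • (f g - f 0) + f 0 := by
  set d := f g - f 0
  suffices h : ∀ k : ℤ, f (k • g) = k • d + f 0 ∧ f ((k + 1) • g) = (k + 1) • d + f 0 from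
    (h k).1
  intro k
  induction k using Int.induction_on with
  | zero => simp [d]
  | succ k ih =>
    refine ⟨ih.2, ?_⟩
    have hk : ((k : ℤ) + 1 + 1) • g =
        Equiv.pointReflection (((k : ℤ) + 1) • g) ((k : ℤ) • g) := by
      simp only [Equiv.pointReflection_apply, vsub_eq_sub, vadd_eq_add, add_smul, one_smul]
      abel
    rw [hk, hf, ih.1, ih.2, Equiv.pointReflection_apply, vsub_eq_sub, vadd_eq_add]
    simp only [add_smul, one_smul]
    abel
  | pred k ih =>
    refine ⟨?_, by simpa using ih.1⟩
    have hk : (-(k : ℤ) - 1) • g =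
        Equiv.pointReflection ((-(k : ℤ)) • g) ((-(k : ℤ) + 1) • g) := by
      simp only [Equiv.pointReflection_apply, vsub_eq_sub, vadd_eq_add, add_smul, sub_smul,
        one_smul]
      abel
    rw [hk, hf, ih.1, ih.2, Equiv.pointReflection_apply, vsub_eq_sub, vadd_eq_add]
    simp only [add_smul, sub_smul, one_smul]
    abel

theorem ZMod.eq_mul_add_of_map_pointReflection {n : ℕ} {f : ZMod n → ZMod n}
    (hf : ∀ x y, f (Equiv.pointReflection x y) = Equiv.pointReflection (f x) (f y))
    (x : ZMod n) : f x = (f 1 - f 0) * x + f 0 := by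
  obtain ⟨k, rfl⟩ := ZMod.intCast_surjective x
  simpa [zsmul_eq_mul, mul_comm] using map_zsmul_of_map_pointReflection hf 1 k

namespace AffineEquiv

variable {k V P : Type*} [Ring k] [AddCommGroup V] [Module k V] [AddTorsor V P]

def toPerm : (P ≃ᵃ[k] P) →* Equiv.Perm P where
  toFun := AffineEquiv.toEquiv
  map_one' := rfl
  map_mul' _ _ := rfl

theorem toPerm_injective : Injective (toPerm : (P ≃ᵃ[k] P) →* Equiv.Perm P) :=
  toEquiv_injective

end AffineEquiv

theorem ZMod.range_toPerm_eq_quandleAut (n : ℕ) :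
    (AffineEquiv.toPerm : (ZMod n ≃ᵃ[ZMod n] ZMod n) →* _).range =
      quandleAut (fun i j : ZMod n => 2 * j - i) := by
  ext f
  change (∃ e : ZMod n ≃ᵃ[ZMod n] ZMod n, e.toEquiv = f) ↔
    ∀ a b, f (2 * b - a) = 2 * f b - f a
  simp_rw [← Equiv.pointReflection_eq_two_mul_sub]
  constructor
  · rintro ⟨e, rfl⟩ a b
    exact e.toAffineMap.map_pointReflection b a
  · intro hf
    have hf_affine := ZMod.eq_mul_add_of_map_pointReflection fun x y => hf y x
    have hu : IsUnit (f 1 - f 0) := by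
      obtain ⟨x, hx⟩ := f.surjective (1 + f 0)
      exact IsUnit.of_mul_eq_one x (by rw [hf_affine] at hx; linear_combination hx)
    refine ⟨AffineEquiv.mk' f (LinearEquiv.smulOfUnit hu.unit) 0 fun x => ?_,
      Equiv.ext fun _ => rfl⟩
    simpa [LinearEquiv.smulOfUnit, Units.smul_def] using hf_affine x

theorem aut_dihedral_quandle_iso_affineGroup_general (n : ℕ) :
    Nonempty (↥(quandleAut (fun i j : ZMod n => 2 * j - i)) ≃*
      (ZMod n ≃ᵃ[ZMod n] ZMod n)) :=
  ⟨((MonoidHom.ofInjective AffineEquiv.toPerm_injective).trans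
    (MulEquiv.subgroupCongr (ZMod.range_toPerm_eq_quandleAut n))).symm⟩

/-- The automorphism group of the dihedral quandle `R_n` (the set `ZMod n`
with operation `i * j = 2j - i`) is isomorphic, as a group, to the affine
group `Aff(ZMod n)` of the integers mod `n` (the maps `x ↦ a x + b` with `a`
a unit, i.e. the semidirect product `ZMod n ⋊ (ZMod n)ˣ`). -/
theorem aut_dihedral_quandle_iso_affineGroup (n : ℕ) (hn : 0 < n) :
    Nonempty (↥(quandleAut (fun i j : ZMod n => 2 * j - i)) ≃*
      (ZMod n ≃ᵃ[ZMod n] ZMod n)) :=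
  aut_dihedral_quandle_iso_affineGroup_general n
end

section
/- Let n be a positive integer and let R_n be the dihedral quandle (Z_n with i * j = 2j − i mod n). Every quandle automorphism f of R_n is an affine transformation: there exist a unit a ∈ (Z_n)^× and b ∈ Z_n such that f(x) = ax + b for all x ∈ Z_n. -/
/-! The hypothesis says `f (x + 2) - f (x + 1) = f (x + 1) - f x`, so `f` has constant first
differences along `ℤ`; since every element of `ZMod n` is an integer cast, `f` is affine with slope
`f 1 - f 0`, and surjectivity forces the slope to be a unit. -/

section

variable {R : Type*} [CommRing R]

theorem apply_intCast_of_map_two_mul_sub {f : R → R}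
    (hf : ∀ i j : R, f (2 * j - i) = 2 * f j - f i) (k : ℤ) :
    f k = (f 1 - f 0) * k + f 0 := by
  suffices h : f k = (f 1 - f 0) * k + f 0 ∧ f (k + 1) = (f 1 - f 0) * (k + 1) + f 0 from h.1
  induction k using Int.induction_on with
  | zero => simp
  | succ k ih =>
    push_cast at ih ⊢
    have step := hf k (k + 1)
    rw [show 2 * ((k : R) + 1) - k = k + 1 + 1 by ring] at step
    exact ⟨ih.2, by linear_combination step + 2 * ih.2 - ih.1⟩
  | pred k ih =>
    push_cast at ih ⊢
    have step := hf (-k + 1) (-k)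
    rw [show 2 * (-k : R) - (-k + 1) = -k - 1 by ring] at step
    exact ⟨by linear_combination step + 2 * ih.1 - ih.2, by rw [sub_add_cancel]; exact ih.1⟩

theorem isUnit_of_surjective_of_eq_mul_add {f : R → R} (hsurj : Function.Surjective f) {a b : R}
    (hf : ∀ x, f x = a * x + b) : IsUnit a := by
  obtain ⟨x, hx⟩ := hsurj (1 + b)
  exact IsUnit.of_mul_eq_one x (by linear_combination (hf x).symm.trans hx)

end

theorem dihedral_quandle_automorphism_is_affine_general (n : ℕ)
    (f : ZMod n → ZMod n) (hbij : Function.Bijective f)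
    (hhom : ∀ i j : ZMod n, f (2 * j - i) = 2 * f j - f i) :
    ∃ (a : (ZMod n)ˣ) (b : ZMod n), ∀ x : ZMod n, f x = (a : ZMod n) * x + b := by
  have affine : ∀ x, f x = (f 1 - f 0) * x + f 0 := by
    intro x
    obtain ⟨k, rfl⟩ := ZMod.intCast_surjective x
    exact apply_intCast_of_map_two_mul_sub hhom k
  exact ⟨(isUnit_of_surjective_of_eq_mul_add hbij.2 affine).unit, f 0, affine⟩

/-- Every quandle automorphism `f` of the dihedral quandle
`R_n = (ZMod n, i * j = 2j - i)` is an affine transformation: there are a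
unit `a` of `ZMod n` and `b : ZMod n` with `f x = a x + b` for all `x`. -/
theorem dihedral_quandle_automorphism_is_affine (n : ℕ) (hn : 0 < n)
    (f : ZMod n → ZMod n) (hbij : Function.Bijective f)
    (hhom : ∀ i j : ZMod n, f (2 * j - i) = 2 * f j - f i) :
    ∃ (a : (ZMod n)ˣ) (b : ZMod n), ∀ x : ZMod n, f x = (a : ZMod n) * x + b :=
  dihedral_quandle_automorphism_is_affine_general n f hbij hhom
end

section
/- Let n be a positive integer, and let g : Z_n → Z_n be a function satisfying g(2y − x) = 2g(y) − g(x) for all x, y ∈ Z_n and g(0) = 0. Then g is Z_n-linear: g(λ·x) = λ·g(x) for all λ, x ∈ Z_n. -/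
/-!
A map `g` with `g 0 = 0` that commutes with the core operation `x ◃ y = 2y - x` is odd
(take `y = 0`), and the identity `(k + 2) x = 2 ((k + 1) x) - k x` propagates
`g (k x) = k g x` from `k` and `k + 1` to `k + 2`. Hence `g` commutes with every integer
multiple, and every element of `ZMod n` acts on `ZMod n` as an integer multiple.
-/

section CoreOperation

variable {A B : Type*} [AddCommGroup A] [AddCommGroup B] {g : A → B}

theorem map_nsmul_of_map_two_nsmul_sub (hg : ∀ x y : A, g (2 • y - x) = 2 • g y - g x)
    (hg0 : g 0 = 0) (k : ℕ) (x : A) : g (k • x) = k • g x := by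
  induction k using Nat.twoStepInduction with
  | zero => simpa using hg0
  | one => simp
  | more k ih ih' =>
    calc g ((k + 2) • x) = g (2 • ((k + 1) • x) - k • x) := by congr 1; module
      _ = 2 • ((k + 1) • g x) - k • g x := by rw [hg, ih, ih']
      _ = (k + 2) • g x := by module

theorem map_neg_of_map_two_nsmul_sub (hg : ∀ x y : A, g (2 • y - x) = 2 • g y - g x)
    (hg0 : g 0 = 0) (x : A) : g (-x) = -g x := by
  simpa [hg0] using hg x 0

theorem map_zsmul_of_map_two_nsmul_sub (hg : ∀ x y : A, g (2 • y - x) = 2 • g y - g x)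
    (hg0 : g 0 = 0) (k : ℤ) (x : A) : g (k • x) = k • g x := by
  cases k with
  | ofNat k => simpa using map_nsmul_of_map_two_nsmul_sub hg hg0 k x
  | negSucc k =>
    rw [negSucc_zsmul, negSucc_zsmul, map_neg_of_map_two_nsmul_sub hg hg0,
      map_nsmul_of_map_two_nsmul_sub hg hg0]

end CoreOperation

theorem fixing_zero_commuting_with_dihedral_op_is_linear_general (n : ℕ)
    (g : ZMod n → ZMod n) (hg : ∀ x y : ZMod n, g (2 * y - x) = 2 * g y - g x)
    (hg0 : g 0 = 0) :
    ∀ l x : ZMod n, g (l * x) = l * g x := by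
  have hg' : ∀ x y : ZMod n, g (2 • y - x) = 2 • g y - g x := by
    simpa only [two_nsmul, two_mul] using hg
  intro l x
  have hl : ((l.cast : ℤ) : ZMod n) = l := ZMod.intCast_zmod_cast l
  rw [← hl, ← zsmul_eq_mul, ← zsmul_eq_mul]
  exact map_zsmul_of_map_two_nsmul_sub hg' hg0 _ x

/-- If `g : ZMod n → ZMod n` satisfies `g (2y - x) = 2 g y - g x` for all
`x y` and `g 0 = 0`, then `g` is `ZMod n`-linear: `g (l * x) = l * g x`. -/
theorem fixing_zero_commuting_with_dihedral_op_is_linear (n : ℕ) (hn : 0 < n)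
    (g : ZMod n → ZMod n) (hg : ∀ x y : ZMod n, g (2 * y - x) = 2 * g y - g x)
    (hg0 : g 0 = 0) :
    ∀ l x : ZMod n, g (l * x) = l * g x :=
  fixing_zero_commuting_with_dihedral_op_is_linear_general n g hg hg0
end

section
/- Let n be a positive integer and let R_n be the dihedral quandle (Z_n with i * j = 2j − i mod n). The cardinality of the automorphism group Aut(R_n) equals n·φ(n), where φ is Euler's totient function. -/
/-!
An endomorphism `f` of the Takasaki quandle `i * j = 2j - i` of a ring satisfies
`f (k + 1) - f k = f k - f (k - 1)` on integers, so it is affine on the image of `ℤ`, which is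
everything in `ZMod n`. If `f` is onto, its slope `f 1 - f 0` is a unit, and conversely every
`x ↦ c x + d` with `c` a unit is an automorphism. Hence `Aut(R_n) ≃ (ZMod n)ˣ × ZMod n`.
-/

section TakasakiQuandle

variable {R : Type*} [CommRing R]

theorem map_intCast_eq_of_map_two_mul_sub {f : R → R}
    (hf : ∀ a b, f (2 * b - a) = 2 * f b - f a) (k : ℤ) :
    f k = (f 1 - f 0) * k + f 0 := by
  suffices f k = (f 1 - f 0) * k + f 0 ∧ f (k + 1) = (f 1 - f 0) * (k + 1) + f 0 from this.1
  induction k with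
  | zero => simp
  | succ i ih =>
    push_cast at ih ⊢
    have step := hf i (i + 1)
    rw [show 2 * ((i : R) + 1) - i = i + 1 + 1 by ring, ih.1, ih.2] at step
    exact ⟨ih.2, by rw [step]; ring⟩
  | pred i ih =>
    push_cast at ih ⊢
    have step := hf (-i + 1) (-i)
    rw [show 2 * (-(i : R)) - (-i + 1) = -i - 1 by ring, ih.1, ih.2] at step
    exact ⟨by rw [step]; ring, by rw [sub_add_cancel, ih.1]⟩

theorem map_eq_of_map_two_mul_sub (hR : Function.Surjective (Int.cast : ℤ → R)) {f : R → R}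
    (hf : ∀ a b, f (2 * b - a) = 2 * f b - f a) (x : R) :
    f x = (f 1 - f 0) * x + f 0 := by
  obtain ⟨k, rfl⟩ := hR x
  exact map_intCast_eq_of_map_two_mul_sub hf k

theorem isUnit_of_surjective_mul_add {c d : R} (h : Function.Surjective fun x : R => c * x + d) :
    IsUnit c := by
  obtain ⟨x, hx⟩ := h (1 + d)
  exact .of_mul_eq_one x (add_right_cancel hx)

theorem addRight_mul_mulLeft_mem_quandleAut (c : Rˣ) (d : R) :
    Equiv.addRight d * c.mulLeft ∈ quandleAut (fun i j : R => 2 * j - i) := by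
  intro a b
  simp only [Equiv.Perm.mul_apply, Equiv.coe_addRight, Units.mulLeft_apply]
  ring

theorem bijective_addRight_mul_mulLeft (hR : Function.Surjective (Int.cast : ℤ → R)) :
    Function.Bijective fun p : Rˣ × R =>
      (⟨Equiv.addRight p.2 * p.1.mulLeft, addRight_mul_mulLeft_mem_quandleAut p.1 p.2⟩ :
        quandleAut (fun i j : R => 2 * j - i)) := by
  constructor
  · rintro ⟨c, d⟩ ⟨c', d'⟩ h
    have hx (x : R) : c * x + d = c' * x + d' :=
      congrArg (fun g : quandleAut (fun i j : R => 2 * j - i) => (g : Equiv.Perm R) x) h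
    have hd : d = d' := by simpa using hx 0
    subst hd
    simpa [Units.ext_iff] using hx 1
  · rintro ⟨f, hf⟩
    have hfx := map_eq_of_map_two_mul_sub hR hf
    obtain ⟨c, hc⟩ : IsUnit (f 1 - f 0) :=
      isUnit_of_surjective_mul_add (d := f 0) (funext hfx ▸ f.surjective)
    refine ⟨(c, f 0), Subtype.ext (Equiv.ext fun x => ?_)⟩
    simp [hc, ← hfx]

theorem card_quandleAut_two_mul_sub (hR : Function.Surjective (Int.cast : ℤ → R)) :
    Nat.card (quandleAut (fun i j : R => 2 * j - i)) = Nat.card Rˣ * Nat.card R := by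
  rw [← Nat.card_prod, Nat.card_eq_of_bijective _ (bijective_addRight_mul_mulLeft hR)]

end TakasakiQuandle

theorem card_aut_dihedral_quandle_general (n : ℕ) :
    Nat.card ↥(quandleAut (fun i j : ZMod n => 2 * j - i)) = n * Nat.totient n := by
  rw [card_quandleAut_two_mul_sub ZMod.intCast_surjective, Nat.card_zmod, mul_comm]
  rcases n.eq_zero_or_pos with rfl | hn
  · -- `ZMod 0 = ℤ` is infinite, so both sides are the junk value `0`.
    simp
  · have : NeZero n := ⟨hn.ne'⟩
    rw [Nat.card_eq_fintype_card, ZMod.card_units_eq_totient]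

/-- The automorphism group of the dihedral quandle
`R_n = (ZMod n, i * j = 2j - i)` has cardinality `n * φ(n)`, where `φ` is
Euler's totient function. -/
theorem card_aut_dihedral_quandle (n : ℕ) (hn : 0 < n) :
    Nat.card ↥(quandleAut (fun i j : ZMod n => 2 * j - i)) = n * Nat.totient n :=
  card_aut_dihedral_quandle_general n
end

section
/- Let (X,*) be a quandle. If X is faithful, i.e., the map S : X → Inn(X) sending u to the symmetry S_u is injective, then the center of the group Inn(X) is trivial. -/
/-- The inner automorphism group of a binary operation `op` on `X`: the
subgroup of the permutation group of `X` generated by the symmetries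
(right translations) `S_u : x ↦ op x u`. -/
def quandleInn {X : Type*} (op : X → X → X) : Subgroup (Equiv.Perm X) :=
  Subgroup.closure {f : Equiv.Perm X | ∃ u : X, ∀ x : X, f x = op x u}

/-- The symmetry `S_u : x ↦ op x u` as a permutation, given that all right
translations are bijective. -/
noncomputable def quandleSymm {X : Type*} (op : X → X → X)
    (hbij : ∀ b : X, Function.Bijective fun a => op a b) (u : X) : Equiv.Perm X :=
  Equiv.ofBijective _ (hbij u)

/-- The map `S : X → Inn(X)` sending `u` to the symmetry `S_u`. -/
noncomputable def quandleS {X : Type*} (op : X → X → X)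
    (hbij : ∀ b : X, Function.Bijective fun a => op a b) (u : X) :
    ↥(quandleInn op) :=
  ⟨quandleSymm op hbij u, Subgroup.subset_closure ⟨u, fun _ => rfl⟩⟩

/-! The symmetries are automorphisms of `op` by right distributivity, hence so is every inner
automorphism `g`, and conjugating by `g` gives `g S_u g⁻¹ = S_{g u}`. If `g` is central this
says `S_{g u} = S_u`, so faithfulness forces `g u = u` for every `u`, i.e. `g = 1`. -/

def opAut {X : Type*} (op : X → X → X) : Subgroup (Equiv.Perm X) where
  carrier := {f | ∀ a b, f (op a b) = op (f a) (f b)}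
  one_mem' _ _ := rfl
  mul_mem' {f g} hf hg a b := by
    simp only [Equiv.Perm.mul_apply, hg a b, hf (g a) (g b)]
  inv_mem' {f} hf a b := by
    rw [Equiv.Perm.inv_eq_iff_eq, hf]
    simp only [Equiv.Perm.coe_inv, Equiv.apply_symm_apply]

theorem quandleInn_le_opAut {X : Type*} {op : X → X → X}
    (hdist : ∀ a b c : X, op (op a b) c = op (op a c) (op b c)) :
    quandleInn op ≤ opAut op := by
  refine Subgroup.closure_le _ |>.mpr ?_
  rintro f ⟨u, hf⟩ a b
  rw [hf, hf, hf, hdist]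

theorem conj_quandleSymm_of_mem_opAut {X : Type*} {op : X → X → X}
    (hbij : ∀ b : X, Function.Bijective fun a => op a b) {f : Equiv.Perm X}
    (hf : f ∈ opAut op) (u : X) :
    f * quandleSymm op hbij u * f⁻¹ = quandleSymm op hbij (f u) := by
  ext x
  change f (op (f⁻¹ x) u) = op x (f u)
  rw [hf]
  simp only [Equiv.Perm.coe_inv, Equiv.apply_symm_apply]

theorem center_inn_trivial_of_faithful_general (X : Type*) (op : X → X → X)
    (hbij : ∀ b : X, Function.Bijective fun a => op a b)
    (hdist : ∀ a b c : X, op (op a b) c = op (op a c) (op b c))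
    (hfaithful : Function.Injective (quandleS op hbij)) :
    Subgroup.center ↥(quandleInn op) = ⊥ := by
  refine eq_bot_iff.mpr fun g hg => Subgroup.mem_bot.mpr ?_
  have hg_apply : ∀ u, g.1 u = u := by
    intro u
    have hcomm : quandleSymm op hbij u * g.1 = g.1 * quandleSymm op hbij u :=
      congrArg Subtype.val (Subgroup.mem_center_iff.mp hg (quandleS op hbij u))
    refine hfaithful (Subtype.ext ?_)
    change quandleSymm op hbij (g.1 u) = quandleSymm op hbij u
    rw [← conj_quandleSymm_of_mem_opAut hbij (quandleInn_le_opAut hdist g.2), ← hcomm,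
      mul_inv_cancel_right]
  exact Subtype.ext (Equiv.ext hg_apply)

/-- If a quandle `(X, op)` is faithful, i.e. the map `S : X → Inn(X)`,
`u ↦ S_u`, is injective, then the center of the group `Inn(X)` is trivial. -/
theorem center_inn_trivial_of_faithful (X : Type*) (op : X → X → X)
    (hfix : ∀ a : X, op a a = a)
    (hbij : ∀ b : X, Function.Bijective fun a => op a b)
    (hdist : ∀ a b c : X, op (op a b) c = op (op a c) (op b c))
    (hfaithful : Function.Injective (quandleS op hbij)) :
    Subgroup.center ↥(quandleInn op) = ⊥ :=
  center_inn_trivial_of_faithful_general X op hbij hdist hfaithful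
end

section
/- Let (X,*) be a quandle such that the map S : X → Inn(X), u ↦ S_u, is a bijection. Then X is isomorphic as a quandle to Conj(Inn(X)) (the group Inn(X) with the conjugation quandle operation), and the center of the group Inn(X) is trivial. -/
section

variable {X : Type*} {op : X → X → X} {hbij : ∀ b : X, Function.Bijective fun a => op a b}

lemma quandleSymm_mul_quandleSymm
    (hdist : ∀ a b c : X, op (op a b) c = op (op a c) (op b c)) (u v : X) :
    quandleSymm op hbij v * quandleSymm op hbij u =
      quandleSymm op hbij (op u v) * quandleSymm op hbij v :=
  Equiv.ext fun x => hdist x u v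

lemma mul_quandleSymm_of_mem_quandleInn
    (hdist : ∀ a b c : X, op (op a b) c = op (op a c) (op b c))
    {p : Equiv.Perm X} (hp : p ∈ quandleInn op) (u : X) :
    p * quandleSymm op hbij u = quandleSymm op hbij (p u) * p := by
  induction hp using Subgroup.closure_induction generalizing u with
  | mem f hf =>
    obtain ⟨v, hv⟩ := hf
    obtain rfl : f = quandleSymm op hbij v := Equiv.ext hv
    exact quandleSymm_mul_quandleSymm hdist u v
  | one => simp
  | mul g h _ _ ihg ihh =>
    calc g * h * quandleSymm op hbij u
        = g * quandleSymm op hbij (h u) * h := by rw [mul_assoc g, ihh, ← mul_assoc]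
      _ = quandleSymm op hbij ((g * h) u) * (g * h) := by rw [ihg, mul_assoc]; rfl
  | inv g _ ihg =>
    have hu := ihg (g⁻¹ u)
    rw [show g (g⁻¹ u) = u from g.apply_symm_apply u] at hu
    rw [inv_mul_eq_iff_eq_mul, ← mul_assoc, hu, mul_inv_cancel_right]

lemma quandleS_apply_eq_conj
    (hdist : ∀ a b c : X, op (op a b) c = op (op a c) (op b c))
    (g : quandleInn op) (u : X) :
    quandleS op hbij ((g : Equiv.Perm X) u) = g * quandleS op hbij u * g⁻¹ := by
  rw [eq_mul_inv_iff_mul_eq]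
  exact Subtype.ext (mul_quandleSymm_of_mem_quandleInn (hbij := hbij) hdist g.2 u).symm

lemma center_quandleInn_eq_bot
    (hdist : ∀ a b c : X, op (op a b) c = op (op a c) (op b c))
    (hS : Function.Injective (quandleS op hbij)) :
    Subgroup.center (quandleInn op) = ⊥ := by
  refine (Subgroup.eq_bot_iff_forall _).2 fun g hg => Subtype.ext (Equiv.ext fun u => hS ?_)
  rw [quandleS_apply_eq_conj hdist, (Subgroup.mem_center_iff.1 hg _).symm, mul_inv_cancel_right]
  rfl

end

theorem quandle_iso_conj_inn_of_S_bijective_general (X : Type*) (op : X → X → X)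
    (hbij : ∀ b : X, Function.Bijective fun a => op a b)
    (hdist : ∀ a b c : X, op (op a b) c = op (op a c) (op b c))
    (hS : Function.Bijective (quandleS op hbij)) :
    (∃ f : X ≃ ↥(quandleInn op),
        ∀ a b : X, f (op a b) = f b * f a * (f b)⁻¹) ∧
      Subgroup.center ↥(quandleInn op) = ⊥ :=
  ⟨⟨Equiv.ofBijective _ hS, fun a b => quandleS_apply_eq_conj hdist (quandleS op hbij b) a⟩,
    center_quandleInn_eq_bot hdist hS.1⟩

/-- If the map `S : X → Inn(X)`, `u ↦ S_u`, of a quandle `(X, op)` is a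
bijection, then `X` is isomorphic as a quandle to `Conj(Inn(X))` (the group
`Inn(X)` with the conjugation quandle operation `g * h = h g h⁻¹`), and the
center of the group `Inn(X)` is trivial. -/
theorem quandle_iso_conj_inn_of_S_bijective (X : Type*) (op : X → X → X)
    (hfix : ∀ a : X, op a a = a)
    (hbij : ∀ b : X, Function.Bijective fun a => op a b)
    (hdist : ∀ a b c : X, op (op a b) c = op (op a c) (op b c))
    (hS : Function.Bijective (quandleS op hbij)) :
    (∃ f : X ≃ ↥(quandleInn op),
        ∀ a b : X, f (op a b) = f b * f a * (f b)⁻¹) ∧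
      Subgroup.center ↥(quandleInn op) = ⊥ :=
  quandle_iso_conj_inn_of_S_bijective_general X op hbij hdist hS
end

section
/- Let Σ_3 be the symmetric group on 3 letters and let Conj(Σ_3) be the quandle on Σ_3 with operation x * y = y x y^{-1}. Then the full quandle automorphism group Aut(Conj(Σ_3)) is isomorphic, as a group, to Σ_3. -/
/-!
Conjugation gives a homomorphism `Σ₃ → Aut(Conj Σ₃)`, injective because `Σ₃` has trivial centre.
A quandle automorphism `f` of `Conj G` preserves commutation (`x` and `y` commute iff
`y * x * y⁻¹ = x`), hence the sizes of centralizers, so on `Σ₃` it permutes the three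
transpositions; after composing with an inner automorphism, `f` fixes the generators `(0 1)` and
`(1 2)`. An automorphism fixing a generating set commutes with every inner automorphism, so for
each generator `s` both `f b` and `b` conjugate `s` to `f (b * s * b⁻¹)`; hence `(f b)⁻¹ * b` is
central and `f b = b`.
-/

open Equiv Finset Subgroup

section ConjQuandle

variable {G : Type*} [Group G]

variable (G) in
abbrev conjQuandleAut : Subgroup (Perm G) := quandleAut fun x y : G => y * x * y⁻¹

lemma map_conj_of_mem_conjQuandleAut {f : Perm G} (hf : f ∈ conjQuandleAut G) (a b : G) :
    f (b * a * b⁻¹) = f b * f a * (f b)⁻¹ :=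
  hf a b

variable (G) in
def conjPerm : G →* Perm G := (MulAut.toPerm G).comp MulAut.conj

@[simp]
lemma conjPerm_apply (g x : G) : conjPerm G g x = g * x * g⁻¹ := rfl

lemma conjPerm_mem_conjQuandleAut (g : G) : conjPerm G g ∈ conjQuandleAut G := by
  intro a b
  simp only [conjPerm_apply]
  group

variable (G) in
def conjQuandleAutHom : G →* conjQuandleAut G :=
  (conjPerm G).codRestrict _ conjPerm_mem_conjQuandleAut

@[simp]
lemma conjQuandleAutHom_apply (g x : G) : (conjQuandleAutHom G g : Perm G) x = g * x * g⁻¹ := rfl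

lemma conjQuandleAutHom_injective (hZ : center G = ⊥) :
    Function.Injective (conjQuandleAutHom G) := by
  refine (injective_iff_map_eq_one _).2 fun g hg => ?_
  have hcenter : g ∈ center G := mem_center_iff.2 fun x => by
    have hx : g * x * g⁻¹ = x := DFunLike.congr_fun (congrArg Subtype.val hg) x
    rw [mul_inv_eq_iff_eq_mul] at hx
    exact hx.symm
  simpa [hZ] using hcenter

lemma map_mul_comm_iff {f : Perm G} (hf : f ∈ conjQuandleAut G) {a y : G} :
    f a * f y = f y * f a ↔ a * y = y * a := by
  rw [← mul_inv_eq_iff_eq_mul, ← mul_inv_eq_iff_eq_mul, ← map_conj_of_mem_conjQuandleAut hf,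
    f.injective.eq_iff]

lemma card_commute_map [Fintype G] [DecidableEq G] {f : Perm G} (hf : f ∈ conjQuandleAut G)
    (a : G) : #{x | f a * x = x * f a} = #{x | a * x = x * a} :=
  (card_equiv f fun y => by simp only [mem_filter, mem_univ, true_and, map_mul_comm_iff hf]).symm

lemma map_conj_eq_of_forall_mem_fixed {S : Set G} (hS : closure S = ⊤) {f : Perm G}
    (hf : f ∈ conjQuandleAut G) (hfix : ∀ s ∈ S, f s = s) (w x : G) :
    f (w * x * w⁻¹) = w * f x * w⁻¹ := by
  -- The elements whose conjugation commutes with `f` form a subgroup, and it contains `S`.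
  have hle : closure S ≤ (centralizer {f}).comap (conjPerm G) :=
    (closure_le _).2 fun s hs => mem_centralizer_singleton_iff.2 <| Perm.ext fun y => by
      simp [map_conj_of_mem_conjQuandleAut hf, hfix s hs]
  exact DFunLike.congr_fun (mem_centralizer_singleton_iff.1 (hle (hS ▸ mem_top w))).symm x

lemma eq_one_of_forall_mem_fixed {S : Set G} (hS : closure S = ⊤) (hZ : center G = ⊥)
    {f : Perm G} (hf : f ∈ conjQuandleAut G) (hfix : ∀ s ∈ S, f s = s) : f = 1 := by
  refine Perm.ext fun b => ?_
  have hcentral : (f b)⁻¹ * b ∈ center G := by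
    rw [← centralizer_univ, ← coe_top, ← hS, centralizer_closure, mem_centralizer_iff]
    intro s hs
    have hconj : f b * s * (f b)⁻¹ = b * s * b⁻¹ := by
      calc f b * s * (f b)⁻¹ = f (b * s * b⁻¹) := by
            rw [map_conj_of_mem_conjQuandleAut hf, hfix s hs]
        _ = b * s * b⁻¹ := by rw [map_conj_eq_of_forall_mem_fixed hS hf hfix, hfix s hs]
    calc s * ((f b)⁻¹ * b) = (f b)⁻¹ * (f b * s * (f b)⁻¹) * b := by group
      _ = (f b)⁻¹ * (b * s * b⁻¹) * b := by rw [hconj]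
      _ = (f b)⁻¹ * b * s := by group
  rw [hZ, mem_bot, inv_mul_eq_one] at hcentral
  exact hcentral

lemma eq_of_eqOn_of_closure_eq_top {S : Set G} (hS : closure S = ⊤) (hZ : center G = ⊥)
    {f f' : conjQuandleAut G} (h : ∀ s ∈ S, (f : Perm G) s = (f' : Perm G) s) : f = f' := by
  have hfix : ∀ s ∈ S, ((f'⁻¹ * f : conjQuandleAut G) : Perm G) s = s := fun s hs => by
    simp [h s hs]
  have hone : f'⁻¹ * f = 1 := Subtype.ext (eq_one_of_forall_mem_fixed hS hZ (f'⁻¹ * f).2 hfix)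
  exact (inv_mul_eq_one.1 hone).symm

end ConjQuandle

section SymmetricGroupThree

lemma center_perm_fin_three : center (Perm (Fin 3)) = ⊥ := by
  refine eq_bot_iff.2 fun z hz => mem_bot.2 ?_
  rw [mem_center_iff] at hz
  revert z
  decide

lemma closure_swap_zero_one_swap_one_two :
    closure {swap (0 : Fin 3) 1, swap 1 2} = ⊤ := by
  have h := closure_eq_top_of_mclosure_eq_top (Perm.mclosure_swap_castSucc_succ 2)
  convert h using 2
  ext σ
  simp [Fin.exists_fin_two, eq_comm]

-- The elements with a two-element centralizer are the transpositions, on which `Σ₃` acts as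
-- the full permutation group of a three-element set.
lemma exists_conj_eq_of_card_commute (a b : Perm (Fin 3)) (ha : #{x | a * x = x * a} = 2)
    (hb : #{x | b * x = x * b} = 2) (hab : a ≠ b) :
    ∃ g : Perm (Fin 3), g * swap 0 1 * g⁻¹ = a ∧ g * swap 1 2 * g⁻¹ = b := by
  revert a b
  decide

end SymmetricGroupThree

/-- The quandle automorphism group of the conjugation quandle on the
symmetric group `Σ₃` is isomorphic, as a group, to `Σ₃`. -/
theorem aut_conj_symmThree_iso_symmThree :
    Nonempty (↥(quandleAut (fun x y : Equiv.Perm (Fin 3) => y * x * y⁻¹)) ≃*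
      Equiv.Perm (Fin 3)) := by
  refine ⟨(MulEquiv.ofBijective (conjQuandleAutHom _)
    ⟨conjQuandleAutHom_injective center_perm_fin_three, ?_⟩).symm⟩
  rintro ⟨f, hf⟩
  obtain ⟨g, h01, h12⟩ := exists_conj_eq_of_card_commute (f (swap 0 1)) (f (swap 1 2))
    (by rw [card_commute_map hf]; decide) (by rw [card_commute_map hf]; decide)
    (f.injective.ne (by decide))
  refine ⟨g, eq_of_eqOn_of_closure_eq_top closure_swap_zero_one_swap_one_two
    center_perm_fin_three ?_⟩
  simp [h01, h12]
end

section
/- For n even with n ≥ 4, the inner automorphism group Inn(R_n) of the dihedral quandle R_n (Z_n with i * j = 2j − i mod n) is isomorphic to the dihedral group D_{n/2} of order n. -/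
/-!
On `ℤ/2m`, let `r i` act by `x ↦ x - 2i` and `sr i` by `x ↦ 2i - x`; this is an action of `D_m`.
Its reflections are exactly the symmetries `S_u : x ↦ 2u - x` of the dihedral quandle, and its
rotations are products of two of them, so the image is `Inn(R_{2m})`. The action is faithful as
soon as `2 ≠ 0` in `ℤ/2m`, i.e. `m ≠ 1`, since then no reflection fixes both `0` and `1`.
-/

namespace DihedralQuandle

variable {m : ℕ}

noncomputable def double (m : ℕ) : ZMod m →+ ZMod (2 * m) :=
  ZMod.lift m ⟨zmultiplesHom _ 2, by
    simpa [mul_comm] using ZMod.natCast_self (2 * m)⟩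

theorem double_intCast (k : ℤ) : double m k = 2 * k := by
  simp [double, ZMod.lift_coe, mul_comm]

theorem double_injective : Function.Injective (double m) := by
  rw [injective_iff_map_eq_zero]
  intro i hi
  obtain ⟨k, rfl⟩ := ZMod.intCast_surjective i
  rw [double_intCast, ← Int.cast_ofNat, ← Int.cast_mul,
    ZMod.intCast_zmod_eq_zero_iff_dvd, Nat.cast_mul, Nat.cast_ofNat] at hi
  exact (ZMod.intCast_zmod_eq_zero_iff_dvd k m).2
    (Int.dvd_of_mul_dvd_mul_left two_ne_zero hi)

theorem two_ne_zero_of_ne_one (hm : m ≠ 1) : (2 : ZMod (2 * m)) ≠ 0 := by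
  have h2 : ((2 : ℕ) : ZMod (2 * m)) ≠ 0 := by
    rw [Ne, ZMod.natCast_eq_zero_iff]
    exact fun h => hm (Nat.dvd_one.1 ((Nat.mul_dvd_mul_iff_left two_pos).1 h))
  exact_mod_cast h2

noncomputable def toPerm (m : ℕ) : DihedralGroup m →* Equiv.Perm (ZMod (2 * m)) where
  toFun
    | .r i => Equiv.subRight (double m i)
    | .sr i => Equiv.subLeft (double m i)
  map_one' := by rw [DihedralGroup.one_def]; ext; simp
  map_mul' a b := by
    rcases a with i | i <;> rcases b with j | j <;> ext x <;>
      simp [Equiv.Perm.mul_apply] <;> ring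

theorem toPerm_r_apply (i : ZMod m) (x : ZMod (2 * m)) :
    toPerm m (.r i) x = x - double m i := rfl

theorem toPerm_sr_apply (i : ZMod m) (x : ZMod (2 * m)) :
    toPerm m (.sr i) x = double m i - x := rfl

theorem toPerm_injective (hm : m ≠ 1) : Function.Injective (toPerm m) := by
  rw [injective_iff_map_eq_one]
  rintro (i | i) h
  · have h0 := DFunLike.congr_fun h 0
    simp only [toPerm_r_apply, zero_sub, neg_eq_zero, Equiv.Perm.one_apply] at h0
    rw [DihedralGroup.one_def, double_injective (h0.trans (map_zero _).symm)]
  · have h0 := DFunLike.congr_fun h 0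
    have h1 := DFunLike.congr_fun h 1
    simp only [toPerm_sr_apply, sub_zero, Equiv.Perm.one_apply] at h0 h1
    exact absurd (by linear_combination -h1 + h0) (two_ne_zero_of_ne_one hm)

theorem toPerm_sr_intCast (k : ℤ) (x : ZMod (2 * m)) :
    toPerm m (.sr k) x = 2 * (k : ZMod (2 * m)) - x := by
  rw [toPerm_sr_apply, double_intCast]

theorem range_toPerm :
    (toPerm m).range = quandleInn (fun i j : ZMod (2 * m) => 2 * j - i) := by
  have sr_mem (i : ZMod m) :
      toPerm m (.sr i) ∈ quandleInn (fun i j : ZMod (2 * m) => 2 * j - i) := by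
    obtain ⟨k, rfl⟩ := ZMod.intCast_surjective i
    exact Subgroup.subset_closure ⟨k, toPerm_sr_intCast k⟩
  apply le_antisymm
  · rintro _ ⟨i | i, rfl⟩
    · rw [← sub_zero i, ← DihedralGroup.sr_mul_sr, map_mul]
      exact mul_mem (sr_mem 0) (sr_mem i)
    · exact sr_mem i
  · refine (Subgroup.closure_le _).2 ?_
    rintro g ⟨u, hu⟩
    obtain ⟨k, rfl⟩ := ZMod.intCast_surjective u
    exact ⟨.sr k, Equiv.ext fun x => (toPerm_sr_intCast k x).trans (hu x).symm⟩

noncomputable def innEquiv (hm : m ≠ 1) :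
    quandleInn (fun i j : ZMod (2 * m) => 2 * j - i) ≃* DihedralGroup m :=
  (MulEquiv.subgroupCongr range_toPerm).symm.trans
    (MonoidHom.ofInjective (toPerm_injective hm)).symm

end DihedralQuandle

/-- For `n` even with `n ≥ 4`, the inner automorphism group of the dihedral
quandle `R_n = (ZMod n, i * j = 2j - i)` is isomorphic to the dihedral group
`D_{n/2}` of order `n`. -/
theorem inn_dihedral_quandle_even (n : ℕ) (hn : Even n) (hn4 : 4 ≤ n) :
    Nonempty (↥(quandleInn (fun i j : ZMod n => 2 * j - i)) ≃*
      DihedralGroup (n / 2)) := by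
  obtain ⟨m, rfl⟩ := hn.two_dvd
  rw [Nat.mul_div_cancel_left m two_pos]
  exact ⟨DihedralQuandle.innEquiv (by omega)⟩
end
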